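/- arXiv:math/0302231 — 2 statements merged into one kernel-verified Lean document; each statement's English description precedes it below -/
import Mathlib

section
/- Let (Ω(S),T) be a substitution dynamical system over a finite alphabet A. Then the following are equivalent: (i) there exists a letter e∈A satisfying conditions (ℓ) and (o) which occurs with bounded gaps in W(S); (ii) (Ω(S),T) is minimal; (iii) (Ω(S),T) is linearly repetitive. -/
open List Filter Topology MeasureTheory

namespace SubstLR

variable {A : Type*}

/-- Apply the substitution `S` to a finite word. -/
def subst (S : A → List A) (w : List A) : List A := w.flatMap S

/-- `iter S n w` is `S^n(w)`. -/
def iter (S : A → List A) (n : ℕ) (w : List A) : List A := (subst S)^[n] w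

/-- The set `W(S)` of finite words associated to `S`. -/
def WS (S : A → List A) : Set (List A) := {w | ∃ (a : A) (n : ℕ), w <:+: iter S n [a]}

/-- `w` is a finite factor of the two-sided infinite word `ω`. -/
def IsFactor (w : List A) (ω : ℤ → A) : Prop :=
  ∃ k : ℤ, w = (List.range w.length).map fun i => ω (k + i)

/-- The subshift `Ω(S)` associated to `S`. -/
def OmegaS (S : A → List A) : Set (ℤ → A) := {ω | ∀ w, IsFactor w ω → w ∈ WS S}

/-- The set `W(Ω(S))` of finite factors of elements of `Ω(S)`. -/
def WOmega (S : A → List A) : Set (List A) := {w | ∃ ω ∈ OmegaS S, IsFactor w ω}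

/-- Condition (ℓ): `|S^n(e)| → ∞`. -/
def CondL (S : A → List A) (e : A) : Prop :=
  Tendsto (fun n => (iter S n [e]).length) atTop atTop

/-- Condition (o): every letter occurs in some `S^n(e)`. -/
def CondO (S : A → List A) (e : A) : Prop := ∀ a : A, ∃ n : ℕ, a ∈ iter S n [e]

/-- Condition (c): `W(S) = W(Ω(S))`. -/
def CondC (S : A → List A) : Prop := WS S = WOmega S

/-- `(Ω(S),T)` is a substitution dynamical system. -/
def IsSubstSystem (S : A → List A) : Prop := (∃ e, CondL S e ∧ CondO S e) ∧ CondC S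

/-- `v` occurs with bounded gaps in the set of words `W`. -/
def BddGaps (v : List A) (W : Set (List A)) : Prop :=
  ∃ L : ℕ, 0 < L ∧ ∀ w ∈ W, L ≤ w.length → v <:+: w

/-- Condition (BG) for the letter `e`. -/
def BG (S : A → List A) (e : A) : Prop := CondL S e ∧ CondO S e ∧ BddGaps [e] (WS S)

/-- The shift by `k`; `shift 1` is the map `T`. -/
def shift (k : ℤ) (ω : ℤ → A) : ℤ → A := fun n => ω (n + k)

/-- `(Ω(S),T)` is minimal: every orbit is dense in `Ω(S)`. -/
def Minimal [TopologicalSpace A] (S : A → List A) : Prop :=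
  ∀ ω ∈ OmegaS S, OmegaS S ⊆ closure {ω' | ∃ k : ℤ, ω' = shift k ω}

/-- `(Ω(S),T)` is linearly repetitive. -/
def LinRep (S : A → List A) : Prop :=
  ∃ C : ℝ, 0 < C ∧ ∀ v ∈ WS S, ∀ w ∈ WS S, C * v.length ≤ (w.length : ℝ) → v <:+: w

/-- `(Ω(S),T)` is aperiodic. -/
def Aperiodic (S : A → List A) : Prop :=
  ∀ ω ∈ OmegaS S, ∀ k : ℤ, k ≠ 0 → shift k ω ≠ ω

/-- The set `B` of letters `a` with `limsup |S^n(a)| < ∞`. -/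
def Bset (S : A → List A) : Set A := {a | ∃ M : ℕ, ∀ n, (iter S n [a]).length ≤ M}

/-- The set `C = A ∖ B`. -/
def Cset (S : A → List A) : Set A := (Bset S)ᶜ

open Classical in
/-- `tilde S w` is the word obtained from `w` by deleting all letters of `B`. -/
noncomputable def tilde (S : A → List A) (w : List A) : List A :=
  w.filter fun x => decide (x ∈ Cset S)

/-- The induced substitution `S̃`. -/
noncomputable def tildeS (S : A → List A) : A → List A := fun x => tilde S (S x)

/-!
(i) ⇒ (iii). Let `e` satisfy (ℓ) and (o) and occur in every word of `W(S)` of length at least `L`.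
Then `e ∈ S^j(e)` for some `j > 0`, so `n ↦ |S^n(e)|` is monotone up to a constant factor. By (o)
every block `S^n(a)` is at most a constant times `|S^(n+p)(e)|`, and the block of every letter with
unbounded iterates contains `S^(n-N)(e)`. Given `v`, choose the scale `n` at which all these blocks
are comparable to `|v|`. Then `v` lies in `S^n(x t y)` with `x t y ∈ W(S)`, `|x|, |y| ≤ 1` and
`S^n(t)` inside `v`, so `t` has at most one unbounded letter and `|x t y| ≤ 2L + 2`; and every
`w ∈ W(S)` with `|w| ≥ C|v|` contains `S^n(t')` for a long `t' ∈ W(S)`. Every word of `W(S)`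
occurs with bounded gaps (desubstitute a long word until it contains `e`), uniformly over the
finitely many words of length at most `2L + 2`; so `x t y` occurs in `t'`, and `v` in `w`.

(iii) ⇒ (ii). Every central window of a point of `Ω(S)` occurs in every long window of any other.

(ii) ⇒ (i). If a letter `e` had unbounded gaps, compactness would give a point of `Ω(S)` that avoids
`e`; the closure of its orbit misses the points showing `e`, which exist by (c).
-/

theorem length_flatMap_le {B : Type*} {f : A → List B} {K : ℕ} (hK : ∀ a, (f a).length ≤ K)
    (u : List A) : (u.flatMap f).length ≤ K * u.length := by
  induction u with
  | nil => simp
  | cons a u ih =>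
    rw [flatMap_cons, length_append, length_cons, Nat.mul_succ]
    have := hK a
    omega

theorem countP_mul_le_length_flatMap {B : Type*} {f : A → List B} {p : A → Bool} {m : ℕ}
    (h : ∀ a, p a → m ≤ (f a).length) (u : List A) :
    u.countP p * m ≤ (u.flatMap f).length := by
  induction u with
  | nil => simp
  | cons a u ih =>
    rw [flatMap_cons, length_append, countP_cons]
    by_cases hp : p a
    · have := h a hp
      simp only [hp, if_true, Nat.add_mul, Nat.one_mul]
      omega
    · simp only [hp, Bool.false_eq_true, if_false, Nat.add_zero]
      omega

theorem exists_eq_flatMap_append_of_prefix_flatMap {B : Type*} (f : A → List B) {u : List A}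
    {v : List B} (h : v <+: u.flatMap f) :
    ∃ t y d, t ++ y <+: u ∧ y.length ≤ 1 ∧ d <+: y.flatMap f ∧ v = t.flatMap f ++ d := by
  induction u generalizing v with
  | nil => exact ⟨[], [], v, by simp, by simp, by simpa using h, by simp⟩
  | cons b u ih =>
    obtain ⟨r, hr⟩ := h
    rw [flatMap_cons] at hr
    rcases append_eq_append_iff.mp hr with ⟨r', hb, -⟩ | ⟨v', rfl, hu⟩
    · exact ⟨[], [b], v, (prefix_cons_inj b).2 nil_prefix, by simp, ⟨r', by simp [hb]⟩, by simp⟩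
    · obtain ⟨t, y, d, hty, hy, hd, rfl⟩ := ih ⟨r, hu.symm⟩
      exact ⟨b :: t, y, d, (prefix_cons_inj b).2 hty, hy, hd, by simp⟩

theorem exists_cover_of_infix_flatMap {B : Type*} (f : A → List B) {u : List A} {v : List B}
    (h : v <:+: u.flatMap f) :
    ∃ x t y, x ++ t ++ y <:+: u ∧ x.length ≤ 1 ∧ y.length ≤ 1 ∧
      t.flatMap f <:+: v ∧ v <:+: (x ++ t ++ y).flatMap f := by
  induction u with
  | nil => exact ⟨[], [], [], by simp, by simp, by simp, by simp, by simpa using h⟩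
  | cons b u ih =>
    rw [flatMap_cons, infix_append_iff] at h
    rcases h with h | h | ⟨v₁, v₂, rfl, hv₁, hv₂⟩
    · exact ⟨[b], [], [], (prefix_cons_inj b).2 nil_prefix |>.isInfix, by simp, by simp, by simp,
        by simpa using h⟩
    · obtain ⟨x, t, y, hxty, hx, hy, ht, hv⟩ := ih h
      exact ⟨x, t, y, hxty.trans (suffix_cons b u).isInfix, hx, hy, ht, hv⟩
    · obtain ⟨t, y, d, hty, hy, hd, rfl⟩ := exists_eq_flatMap_append_of_prefix_flatMap f hv₂
      refine ⟨[b], t, y, ?_, by simp, hy, ?_, ?_⟩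
      · simpa using ((prefix_cons_inj b).2 hty).isInfix
      · exact ⟨v₁, d, by simp⟩
      · obtain ⟨p, hp⟩ := hv₁
        obtain ⟨q, hq⟩ := hd
        exact ⟨p, q, by simp [← hp, ← hq]⟩

theorem exists_flatMap_infix_of_infix_flatMap {B : Type*} {f : A → List B} {K : ℕ}
    (hK : ∀ a, (f a).length ≤ K) {u : List A} {v : List B} (h : v <:+: u.flatMap f) :
    ∃ t, t <:+: u ∧ t.flatMap f <:+: v ∧ v.length ≤ K * (t.length + 2) := by
  obtain ⟨x, t, y, hxty, hx, hy, ht, hv⟩ := exists_cover_of_infix_flatMap f h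
  refine ⟨t, (infix_append x t y).trans hxty, ht, ?_⟩
  calc v.length ≤ ((x ++ t ++ y).flatMap f).length := hv.length_le
    _ ≤ K * (x ++ t ++ y).length := length_flatMap_le hK _
    _ ≤ K * (t.length + 2) := by
      rw [length_append, length_append]
      exact Nat.mul_le_mul_left _ (by omega)

theorem length_le_countP_add_one_mul {p : A → Bool} {L : ℕ} {t : List A}
    (h : ∀ u, u <:+: t → L ≤ u.length → ∃ a ∈ u, p a) : t.length ≤ (t.countP p + 1) * L := by
  induction hn : t.length using Nat.strong_induction_on generalizing t with
  | _ n ih =>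
    subst hn
    by_cases hshort : t.length < L
    · nlinarith
    obtain ⟨a, ha, hpa⟩ := h _ (take_prefix L t).isInfix (by simp; omega)
    have hL : 0 < L := Nat.pos_of_ne_zero fun hL0 => by simp [hL0] at ha
    have hdrop := ih _ (by simp; omega) (t := t.drop L)
      (fun u hu => h u (hu.trans (drop_suffix L t).isInfix)) rfl
    have hcount : 1 + (t.drop L).countP p ≤ t.countP p := by
      rw [← take_append_drop L t, countP_append]
      have := countP_pos_iff.2 ⟨a, ha, hpa⟩
      simp only [take_append_drop]
      omega
    simp only [length_drop] at hdrop
    calc t.length ≤ ((t.drop L).countP p + 1) * L + L := by omega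
      _ = ((t.drop L).countP p + 2) * L := by ring
      _ ≤ (t.countP p + 1) * L := Nat.mul_le_mul_right _ (by omega)

theorem exists_le_and_lt_succ_of_tendsto {f : ℕ → ℕ} (hf : Tendsto f atTop atTop) {x : ℕ}
    (h0 : f 0 ≤ x) : ∃ r, f r ≤ x ∧ x < f (r + 1) := by
  by_contra! hstep
  have hle : ∀ r, f r ≤ x := fun r => by
    induction r with
    | zero => exact h0
    | succ r ih => exact hstep r ih
  obtain ⟨r, hr⟩ := (hf.eventually_gt_atTop x).exists
  exact (hle r).not_gt hr

theorem iter_add (S : A → List A) (m n : ℕ) (w : List A) :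
    iter S m (iter S n w) = iter S (m + n) w := (Function.iterate_add_apply _ m n w).symm

theorem iter_eq_flatMap (S : A → List A) (n : ℕ) (w : List A) :
    iter S n w = w.flatMap fun a => iter S n [a] := by
  induction n generalizing w with
  | zero => simp [iter]
  | succ n ih =>
    have hsucc (v : List A) : iter S (n + 1) v = iter S n (v.flatMap S) :=
      Function.iterate_succ_apply _ n v
    rw [hsucc, ih, flatMap_assoc]
    congr 1
    funext a
    rw [hsucc, ih, flatMap_singleton]

theorem iter_infix_iter_of_mem {S : A → List A} {a b : A} {k : ℕ} (h : a ∈ iter S k [b])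
    (n : ℕ) : iter S n [a] <:+: iter S (n + k) [b] := by
  rw [← iter_add, iter_eq_flatMap S n (iter S k [b])]
  exact infix_flatMap_of_mem h fun c => iter S n [c]

theorem length_iter_le {S : A → List A} {K : ℕ} (hK : ∀ a, (S a).length ≤ K) (n : ℕ)
    (w : List A) : (iter S n w).length ≤ K ^ n * w.length := by
  induction n with
  | zero => simp [iter]
  | succ n ih =>
    have hsucc : iter S (n + 1) w = (iter S n w).flatMap S := Function.iterate_succ_apply' _ n w
    rw [hsucc, pow_succ', mul_assoc]
    exact (length_flatMap_le hK _).trans (Nat.mul_le_mul_left K ih)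

theorem mem_WS_of_infix {S : A → List A} {v w : List A} (hw : w ∈ WS S) (h : v <:+: w) :
    v ∈ WS S := by
  obtain ⟨a, n, hn⟩ := hw
  exact ⟨a, n, h.trans hn⟩

theorem iter_mem_WS (S : A → List A) (a : A) (n : ℕ) : iter S n [a] ∈ WS S :=
  ⟨a, n, infix_refl _⟩

theorem length_iter_add_le {S : A → List A} {K : ℕ} (hK : ∀ a, (S a).length ≤ K) (m n : ℕ)
    (w : List A) : (iter S (m + n) w).length ≤ K ^ m * (iter S n w).length :=
  iter_add S m n w ▸ length_iter_le hK m _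

section BoundedGaps

variable {S : A → List A} {e : A}

theorem iter_infix_iter_add_mul {j : ℕ} (he : e ∈ iter S j [e]) (N q : ℕ) :
    iter S N [e] <:+: iter S (N + q * j) [e] := by
  induction q with
  | zero => simp
  | succ q ih =>
    rw [Nat.succ_mul, ← Nat.add_assoc]
    exact ih.trans (iter_infix_iter_of_mem he _)

theorem length_iter_le_pow_mul_of_le {K j : ℕ} (hK : ∀ a, (S a).length ≤ K) (hj : 0 < j)
    (he : e ∈ iter S j [e]) {a b : ℕ} (hab : a ≤ b) :
    (iter S a [e]).length ≤ K ^ j * (iter S b [e]).length := by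
  have hK1 : 1 ≤ K := by
    have h1 : 0 < K ^ j := by
      simpa using (length_pos_of_mem he).trans_le (length_iter_le hK j [e])
    exact Nat.pos_of_ne_zero fun h => by simp [h, hj.ne'] at h1
  obtain ⟨d, rfl⟩ := Nat.exists_eq_add_of_le hab
  induction d using Nat.strong_induction_on generalizing a with
  | _ d ih =>
    have hreturn := (iter_infix_iter_of_mem he a).length_le
    by_cases hd : d ≤ j
    · calc (iter S a [e]).length ≤ (iter S (a + j) [e]).length := hreturn
        _ = (iter S ((j - d) + (a + d)) [e]).length := by congr 2; omega
        _ ≤ K ^ (j - d) * (iter S (a + d) [e]).length := length_iter_add_le hK _ _ _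
        _ ≤ K ^ j * (iter S (a + d) [e]).length :=
          Nat.mul_le_mul_right _ (Nat.pow_le_pow_right hK1 (by omega))
    · calc (iter S a [e]).length ≤ (iter S (a + j) [e]).length := hreturn
        _ ≤ K ^ j * (iter S (a + j + (d - j)) [e]).length :=
          ih (d - j) (by omega) (Nat.le_add_right _ _)
        _ = K ^ j * (iter S (a + d) [e]).length := by congr 3; omega

theorem exists_pos_mem_iter_self (hL : CondL S e) {L : ℕ}
    (hgap : ∀ w ∈ WS S, L ≤ w.length → e ∈ w) : ∃ j, 0 < j ∧ e ∈ iter S j [e] := by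
  obtain ⟨j, hj⟩ := (hL.eventually_ge_atTop (max L 2)).exists
  refine ⟨j, Nat.pos_of_ne_zero ?_, hgap _ (iter_mem_WS S e j) ((le_max_left _ _).trans hj)⟩
  rintro rfl
  simp [iter] at hj

theorem exists_infix_iter_of_mem_WS (hO : CondO S e) {j : ℕ} (hj : 0 < j)
    (he : e ∈ iter S j [e]) {v : List A} (hv : v ∈ WS S) (k : ℕ) :
    ∃ N, k ≤ N ∧ v <:+: iter S N [e] := by
  obtain ⟨a, n, hn⟩ := hv
  obtain ⟨m, hm⟩ := hO a
  refine ⟨n + m + k * j, ?_, hn.trans ((iter_infix_iter_of_mem hm n).trans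
    (iter_infix_iter_add_mul he _ k))⟩
  have := Nat.le_mul_of_pos_right k hj
  omega

theorem exists_mem_WS_infix_flatMap_iter (hO : CondO S e) {j : ℕ} (hj : 0 < j)
    (he : e ∈ iter S j [e]) {v : List A} (hv : v ∈ WS S) (n : ℕ) :
    ∃ u ∈ WS S, v <:+: u.flatMap fun a => iter S n [a] := by
  obtain ⟨N, hN, hvN⟩ := exists_infix_iter_of_mem_WS hO hj he hv n
  obtain ⟨d, rfl⟩ := Nat.exists_eq_add_of_le hN
  refine ⟨iter S d [e], iter_mem_WS S e d, ?_⟩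
  rwa [← iter_eq_flatMap, iter_add]

theorem eventually_infix_of_mem_WS [Finite A] (hO : CondO S e) {j : ℕ} (hj : 0 < j)
    (he : e ∈ iter S j [e]) {L : ℕ} (hgap : ∀ w ∈ WS S, L ≤ w.length → e ∈ w) {z : List A}
    (hz : z ∈ WS S) : ∀ᶠ G in atTop, ∀ w ∈ WS S, G ≤ w.length → z <:+: w := by
  obtain ⟨k, -, hzk⟩ := exists_infix_iter_of_mem_WS hO hj he hz 0
  obtain ⟨B, hB⟩ := Finite.exists_le fun a => (iter S k [a]).length
  filter_upwards [eventually_gt_atTop (B * (L + 2))] with G hG w hw hwG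
  obtain ⟨u, hu, hwu⟩ := exists_mem_WS_infix_flatMap_iter hO hj he hw k
  obtain ⟨t, htu, htw, hwt⟩ := exists_flatMap_infix_of_infix_flatMap hB hwu
  have htL : L ≤ t.length := by
    by_contra! h
    have := Nat.mul_le_mul_left B (show t.length + 2 ≤ L + 2 by omega)
    omega
  have het := hgap t (mem_WS_of_infix hu htu) htL
  exact hzk.trans ((infix_flatMap_of_mem het fun a => iter S k [a]).trans htw)

theorem eventually_forall_infix [Finite A] (hO : CondO S e) {j : ℕ} (hj : 0 < j)
    (he : e ∈ iter S j [e]) {L : ℕ} (hgap : ∀ w ∈ WS S, L ≤ w.length → e ∈ w) (Λ : ℕ) :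
    ∀ᶠ G in atTop, ∀ z ∈ WS S, z.length ≤ Λ → ∀ w ∈ WS S, G ≤ w.length → z <:+: w := by
  have := (List.finite_length_le A Λ).eventually_all (l := atTop)
    (p := fun z G => z ∈ WS S → ∀ w ∈ WS S, G ≤ w.length → z <:+: w)
  filter_upwards [this.2 fun z _ => eventually_imp_distrib_left.2
    fun hz => eventually_infix_of_mem_WS hO hj he hgap hz] with G hG z hz hzΛ
  exact hG z hzΛ hz

theorem mem_Cset_of_condL (hL : CondL S e) : e ∈ Cset S := by
  rintro ⟨M, hM⟩
  obtain ⟨n, hn⟩ := (hL.eventually_gt_atTop M).exists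
  exact (hM n).not_gt hn

theorem exists_mem_iter_of_mem_Cset {L : ℕ} (hgap : ∀ w ∈ WS S, L ≤ w.length → e ∈ w) {c : A}
    (hc : c ∈ Cset S) : ∃ k, e ∈ iter S k [c] := by
  by_contra! h
  exact hc ⟨L, fun n => le_of_not_ge fun hn => h n (hgap _ (iter_mem_WS S c n) hn)⟩

theorem exists_forall_length_iter_le [Finite A] (hO : CondO S e) {E : ℕ}
    (hmono : ∀ a b, a ≤ b → (iter S a [e]).length ≤ E * (iter S b [e]).length) :
    ∃ p, ∀ n a, (iter S n [a]).length ≤ E * (iter S (n + p) [e]).length := by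
  have h (a : A) : ∀ᶠ p in atTop, ∀ n, (iter S n [a]).length ≤ E * (iter S (n + p) [e]).length := by
    obtain ⟨k, hk⟩ := hO a
    filter_upwards [eventually_ge_atTop k] with p hp n
    exact (iter_infix_iter_of_mem hk n).length_le.trans (hmono _ _ (by omega))
  obtain ⟨p, hp⟩ := (eventually_all.2 h).exists
  exact ⟨p, fun n a => hp a n⟩

theorem exists_forall_mem_Cset_length_iter_ge [Finite A] {L : ℕ}
    (hgap : ∀ w ∈ WS S, L ≤ w.length → e ∈ w) {E : ℕ}
    (hmono : ∀ a b, a ≤ b → (iter S a [e]).length ≤ E * (iter S b [e]).length) :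
    ∃ N, ∀ c ∈ Cset S, ∀ n, (iter S n [e]).length ≤ E * (iter S (n + N) [c]).length := by
  have h (c : A) : ∀ᶠ N in atTop, c ∈ Cset S →
      ∀ n, (iter S n [e]).length ≤ E * (iter S (n + N) [c]).length := by
    refine eventually_imp_distrib_left.2 fun hc => ?_
    obtain ⟨k, hk⟩ := exists_mem_iter_of_mem_Cset hgap hc
    filter_upwards [eventually_ge_atTop k] with N hN n
    obtain ⟨d, rfl⟩ := Nat.exists_eq_add_of_le hN
    calc (iter S n [e]).length ≤ E * (iter S (n + d) [e]).length := hmono _ _ (by omega)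
      _ ≤ E * (iter S (n + d + k) [c]).length :=
        Nat.mul_le_mul_left _ (iter_infix_iter_of_mem hk _).length_le
      _ = E * (iter S (n + (k + d)) [c]).length := by rw [add_comm k, add_assoc]
  obtain ⟨N, hN⟩ := (eventually_all.2 h).exists
  exact ⟨N, fun c hc => hN c hc⟩

theorem exists_uniform_block_lengths [Finite A] (hL : CondL S e) (hO : CondO S e) {L : ℕ}
    (hgap : ∀ w ∈ WS S, L ≤ w.length → e ∈ w) :
    ∃ D, ∀ m, 0 < m → ∃ n, (∀ a, (iter S n [a]).length ≤ D * m) ∧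
      ∀ c ∈ Cset S, m ≤ (iter S n [c]).length := by
  obtain ⟨K, hK⟩ := Finite.exists_le fun a => (S a).length
  obtain ⟨j, hj, he⟩ := exists_pos_mem_iter_self hL hgap
  have hmono (a b : ℕ) (hab : a ≤ b) := length_iter_le_pow_mul_of_le hK hj he hab
  set E := K ^ j
  have hE : 1 ≤ E := by simpa [iter] using hmono 0 0 le_rfl
  obtain ⟨p, hup⟩ := exists_forall_length_iter_le hO hmono
  obtain ⟨N, hlow⟩ := exists_forall_mem_Cset_length_iter_ge hgap hmono
  refine ⟨E * K ^ (1 + N + p) * E, fun m hm => ?_⟩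
  obtain ⟨r, hr, hr1⟩ := exists_le_and_lt_succ_of_tendsto hL (x := E * m)
    (by simpa [iter] using Nat.mul_le_mul hE hm)
  refine ⟨r + 1 + N, fun a => ?_, fun c hc => ?_⟩
  · calc (iter S (r + 1 + N) [a]).length ≤ E * (iter S ((1 + N + p) + r) [e]).length := by
          convert hup (r + 1 + N) a using 4; ring
      _ ≤ E * (K ^ (1 + N + p) * (iter S r [e]).length) :=
        Nat.mul_le_mul_left _ (length_iter_add_le hK _ _ _)
      _ ≤ E * (K ^ (1 + N + p) * (E * m)) := by gcongr
      _ = E * K ^ (1 + N + p) * E * m := by ring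
  · exact (Nat.lt_of_mul_lt_mul_left (hr1.trans_le (hlow c hc (r + 1)))).le

theorem exists_mem_WS_length_le_infix_flatMap {L : ℕ} (hgap : ∀ w ∈ WS S, L ≤ w.length → e ∈ w)
    (heC : e ∈ Cset S) {n : ℕ} {u v : List A} (hu : u ∈ WS S)
    (hvu : v <:+: u.flatMap fun a => iter S n [a]) (hv : v ≠ [])
    (hblock : ∀ c ∈ Cset S, v.length ≤ (iter S n [c]).length) :
    ∃ z ∈ WS S, z.length ≤ 2 * L + 2 ∧ v <:+: z.flatMap fun a => iter S n [a] := by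
  classical
  obtain ⟨x, t, y, hxty, hx, hy, htv, hvz⟩ := exists_cover_of_infix_flatMap _ hvu
  -- every unbounded letter of `t` contributes a block at least as long as `v` itself
  have hcount : t.countP (fun a => decide (a ∈ Cset S)) ≤ 1 := by
    have h1 := countP_mul_le_length_flatMap (fun a ha => hblock a (of_decide_eq_true ha)) t
    have h2 : 0 < v.length := length_pos_iff.2 hv
    nlinarith [htv.length_le]
  have htlen : t.length ≤ 2 * L := by
    have htWS := mem_WS_of_infix hu ((infix_append x t y).trans hxty)
    have := length_le_countP_add_one_mul (p := fun a => decide (a ∈ Cset S)) (L := L) (t := t)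
      fun w hw hwL => ⟨e, hgap w (mem_WS_of_infix htWS hw) hwL, decide_eq_true heC⟩
    nlinarith
  exact ⟨x ++ t ++ y, mem_WS_of_infix hu hxty, by simp only [length_append]; omega, hvz⟩

theorem linRep_of_bddGaps [Finite A] (hL : CondL S e) (hO : CondO S e)
    (hbg : BddGaps [e] (WS S)) : LinRep S := by
  obtain ⟨L, -, hgap⟩ := hbg
  simp only [singleton_infix_iff] at hgap
  obtain ⟨j, hj, he⟩ := exists_pos_mem_iter_self hL hgap
  obtain ⟨G, hG⟩ := (eventually_forall_infix hO hj he hgap (2 * L + 2)).exists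
  obtain ⟨D, hD⟩ := exists_uniform_block_lengths hL hO hgap
  have heC := mem_Cset_of_condL hL
  have hD0 : 0 < D := by
    obtain ⟨n, hup, hlow⟩ := hD 1 one_pos
    have := (hlow e heC).trans (hup e)
    omega
  refine ⟨((G + 2) * D : ℕ), by positivity, fun v hv w hw hvw => ?_⟩
  rcases eq_or_ne v [] with rfl | hv0
  · exact nil_infix
  obtain ⟨n, hup, hlow⟩ := hD v.length (length_pos_iff.2 hv0)
  obtain ⟨u, hu, hvu⟩ := exists_mem_WS_infix_flatMap_iter hO hj he hv n
  obtain ⟨z, hz, hzlen, hvz⟩ := exists_mem_WS_length_le_infix_flatMap hgap heC hu hvu hv0 hlow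
  obtain ⟨u', hu', hwu'⟩ := exists_mem_WS_infix_flatMap_iter hO hj he hw n
  obtain ⟨t, htu', htw, hwt⟩ := exists_flatMap_infix_of_infix_flatMap hup hwu'
  have htG : G ≤ t.length := by
    have hvw' : (G + 2) * D * v.length ≤ w.length := by exact_mod_cast hvw
    have : (G + 2) * (D * v.length) ≤ (t.length + 2) * (D * v.length) := by
      calc (G + 2) * (D * v.length) ≤ w.length := by rw [← mul_assoc]; exact hvw'
        _ ≤ D * v.length * (t.length + 2) := hwt
        _ = (t.length + 2) * (D * v.length) := mul_comm _ _
    have := Nat.le_of_mul_le_mul_right this (Nat.mul_pos hD0 (length_pos_iff.2 hv0))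
    omega
  have hzt := hG z hz hzlen t (mem_WS_of_infix hu' htu') htG
  exact hvz.trans ((hzt.flatMap _).trans htw)

end BoundedGaps

def window (ω : ℤ → A) (k : ℤ) (L : ℕ) : List A := (List.range L).map fun i : ℕ => ω (k + i)

@[simp]
theorem length_window (ω : ℤ → A) (k : ℤ) (L : ℕ) : (window ω k L).length = L := by
  simp [window]

theorem isFactor_iff {w : List A} {ω : ℤ → A} : IsFactor w ω ↔ ∃ k, w = window ω k w.length := by
  simp [IsFactor, window, ← map_eq_flatMap, List.map_map, Function.comp_def]

theorem isFactor_window (ω : ℤ → A) (k : ℤ) (L : ℕ) : IsFactor (window ω k L) ω :=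
  isFactor_iff.2 ⟨k, by rw [length_window]⟩

theorem window_eq_window_iff {ω ω' : ℤ → A} {k k' : ℤ} {L : ℕ} :
    window ω k L = window ω' k' L ↔ ∀ i < L, ω (k + i) = ω' (k' + i) := by
  simp [window, map_inj_left]

theorem window_add (ω : ℤ → A) (k : ℤ) (a b : ℕ) :
    window ω k (a + b) = window ω k a ++ window ω (k + a) b := by
  simp [window, range_add, add_assoc]

theorem exists_eq_window_of_infix_window {ω : ℤ → A} {k : ℤ} {L : ℕ} {v : List A}
    (h : v <:+: window ω k L) : ∃ r : ℕ, v = window ω (k + r) v.length := by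
  obtain ⟨s, t, hst⟩ := h
  have hL : L = s.length + v.length + t.length := by
    simpa [add_assoc] using (congrArg length hst).symm
  rw [hL, window_add, window_add] at hst
  exact ⟨s.length, (append_inj (append_inj hst.symm (by simp)).1 (by simp)).2.symm⟩

theorem mem_window {ω : ℤ → A} {k : ℤ} {L : ℕ} {i : ℕ} (hi : i < L) : ω (k + i) ∈ window ω k L :=
  mem_map.2 ⟨i, mem_range.2 hi, rfl⟩

theorem shift_mem_OmegaS {S : A → List A} {ω : ℤ → A} (h : ω ∈ OmegaS S) (k : ℤ) :
    shift k ω ∈ OmegaS S := by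
  intro w hw
  obtain ⟨k', hk'⟩ := isFactor_iff.1 hw
  refine h w (isFactor_iff.2 ⟨k' + k, hk'.trans (window_eq_window_iff.2 fun i _ => ?_)⟩)
  simp only [shift]
  ring_nf

theorem isOpen_setOf_apply_eq [TopologicalSpace A] [DiscreteTopology A] (j : ℤ) (a : A) :
    IsOpen {ω : ℤ → A | ω j = a} :=
  (isOpen_discrete {a}).preimage (continuous_apply (A := fun _ : ℤ => A) j)

theorem isOpen_setOf_window_eq [TopologicalSpace A] [DiscreteTopology A] (k : ℤ) (L : ℕ)
    (w : List A) : IsOpen {ω : ℤ → A | window ω k L = w} := by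
  rw [isOpen_iff_forall_mem_open]
  rintro ω₀ rfl
  refine ⟨⋂ i ∈ Finset.range L, {ω | ω (k + i) = ω₀ (k + i)}, fun ω hω => ?_,
    isOpen_biInter_finset fun i _ => isOpen_setOf_apply_eq _ _,
    by simp⟩
  simp only [Set.mem_iInter, Finset.mem_range] at hω
  exact window_eq_window_iff.2 hω

theorem isClosed_OmegaS [TopologicalSpace A] [DiscreteTopology A] (S : A → List A) :
    IsClosed (OmegaS S) := by
  have : OmegaS S = ⋂ w ∉ WS S, ⋂ k, {ω : ℤ → A | window ω k w.length = w}ᶜ := by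
    ext ω
    simp only [OmegaS, isFactor_iff, Set.mem_ofPred_eq, Set.mem_iInter, Set.mem_compl_iff]
    exact ⟨fun h w hw k hk => hw (h w ⟨k, hk.symm⟩),
      fun h w ⟨k, hk⟩ => by_contra fun hw => h w hw k hk.symm⟩
  rw [this]
  exact isClosed_biInter fun w _ =>
    isClosed_iInter fun k => (isOpen_setOf_window_eq k w.length w).isClosed_compl

theorem exists_shift_eq_of_linRep {S : A → List A} (h : LinRep S) {ω ω' : ℤ → A}
    (hω : ω ∈ OmegaS S) (hω' : ω' ∈ OmegaS S) (N : ℕ) :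
    ∃ k, ∀ j : ℤ, |j| ≤ N → shift k ω j = ω' j := by
  obtain ⟨C, -, hC⟩ := h
  have hv := hω' _ (isFactor_window ω' (-N) (2 * N + 1))
  have hw := hω _ (isFactor_window ω 0 ⌈C * (2 * N + 1)⌉₊)
  have hvw := hC _ hv _ hw (by simpa using Nat.le_ceil (C * (2 * N + 1)))
  obtain ⟨r, hr⟩ := exists_eq_window_of_infix_window hvw
  rw [length_window, window_eq_window_iff] at hr
  refine ⟨r + N, fun j hj => ?_⟩
  have hj' := abs_le.1 hj
  obtain ⟨i, hi⟩ : ∃ i : ℕ, (i : ℤ) = j + N := ⟨(j + N).toNat, by omega⟩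
  have := hr i (by omega)
  simp only [shift]
  convert this.symm using 2 <;> omega

theorem mem_closure_orbit_of_forall_exists_shift_eq [TopologicalSpace A] {ω ω' : ℤ → A}
    (h : ∀ N : ℕ, ∃ k, ∀ j : ℤ, |j| ≤ N → shift k ω j = ω' j) :
    ω' ∈ closure {θ | ∃ k, θ = shift k ω} := by
  choose k hk using h
  have htend : Tendsto (fun N => shift (k N) ω) atTop (𝓝 ω') := by
    refine tendsto_pi_nhds.2 fun j => tendsto_const_nhds.congr' ?_
    filter_upwards [eventually_ge_atTop j.natAbs] with N hN
    exact (hk N j (by rw [Int.abs_eq_natAbs]; exact_mod_cast hN)).symm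
  exact mem_closure_of_tendsto htend (Eventually.of_forall fun N => ⟨k N, rfl⟩)

theorem minimal_of_linRep [TopologicalSpace A] {S : A → List A} (h : LinRep S) : Minimal S :=
  fun _ hω _ hω' => mem_closure_orbit_of_forall_exists_shift_eq (exists_shift_eq_of_linRep h hω hω')

theorem exists_mem_OmegaS_forall_abs_le_ne {S : A → List A} (hC : CondC S) {e : A}
    (hbg : ¬BddGaps [e] (WS S)) (n : ℕ) : ∃ θ ∈ OmegaS S, ∀ j : ℤ, |j| ≤ n → θ j ≠ e := by
  simp only [BddGaps, not_exists, not_and, not_forall, exists_prop, singleton_infix_iff] at hbg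
  obtain ⟨w, hw, hwlen, hwe⟩ := hbg (2 * n + 1) (by omega)
  obtain ⟨ω, hω, hfac⟩ : w ∈ WOmega S := hC ▸ hw
  obtain ⟨k, hk⟩ := isFactor_iff.1 hfac
  refine ⟨shift (k + n) ω, shift_mem_OmegaS hω _, fun j hj hje => hwe ?_⟩
  have hj' := abs_le.1 hj
  obtain ⟨i, hi⟩ : ∃ i : ℕ, (i : ℤ) = j + n := ⟨(j + n).toNat, by omega⟩
  have hiw : i < w.length := by omega
  rw [hk, ← hje]
  convert mem_window (ω := ω) (k := k) hiw using 2
  simp only [shift]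
  congr 1
  omega

theorem exists_mem_OmegaS_forall_ne [Finite A] [TopologicalSpace A] [DiscreteTopology A]
    {S : A → List A} {e : A} (h : ∀ n : ℕ, ∃ θ ∈ OmegaS S, ∀ j : ℤ, |j| ≤ n → θ j ≠ e) :
    ∃ θ ∈ OmegaS S, ∀ j, θ j ≠ e := by
  obtain ⟨θ, hθ, hθe⟩ := (isClosed_OmegaS S).isCompact.inter_iInter_nonempty
    (fun j : ℤ => {θ | θ j ≠ e}) (fun j => (isOpen_setOf_apply_eq j e).isClosed_compl) fun u => by
      obtain ⟨θ, hθ, hθe⟩ := h (u.sup Int.natAbs)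
      refine ⟨θ, hθ, Set.mem_iInter₂.2 fun j hj => hθe j ?_⟩
      rw [Int.abs_eq_natAbs]
      exact_mod_cast Finset.le_sup (f := Int.natAbs) hj
  exact ⟨θ, hθ, Set.mem_iInter.1 hθe⟩

theorem bddGaps_of_minimal [Finite A] [TopologicalSpace A] [DiscreteTopology A]
    {S : A → List A} (hC : CondC S) (hmin : Minimal S) (e : A) : BddGaps [e] (WS S) := by
  by_contra hbg
  obtain ⟨θ, hθ, hθe⟩ := exists_mem_OmegaS_forall_ne (exists_mem_OmegaS_forall_abs_le_ne hC hbg)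
  obtain ⟨ω, hω, hfac⟩ : [e] ∈ WOmega S := hC ▸ ⟨e, 0, infix_refl _⟩
  obtain ⟨k, hk⟩ := isFactor_iff.1 hfac
  have horbit : closure {θ' | ∃ k', θ' = shift k' θ} ⊆ {θ' | θ' k ≠ e} :=
    closure_minimal (by rintro _ ⟨k', rfl⟩; exact hθe _) (isOpen_setOf_apply_eq k e).isClosed_compl
  exact horbit (hmin θ hθ hω) (by simpa [window] using hk.symm)

/-- For a substitution dynamical system, the following are equivalent:
(i) some letter `e` satisfying (ℓ) and (o) occurs with bounded gaps in `W(S)`;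
(ii) minimality; (iii) linear repetitivity. -/
theorem statement0 {A : Type*} [Fintype A] [TopologicalSpace A] [DiscreteTopology A]
    (S : A → List A) (hS : IsSubstSystem S) :
    List.TFAE [∃ e : A, CondL S e ∧ CondO S e ∧ BddGaps [e] (WS S),
      Minimal S, LinRep S] := by
  obtain ⟨⟨e, hL, hO⟩, hC⟩ := hS
  tfae_have 1 → 3 := fun ⟨_, hL', hO', hbg⟩ => linRep_of_bddGaps hL' hO' hbg
  tfae_have 3 → 2 := minimal_of_linRep
  tfae_have 2 → 1 := fun hmin => ⟨e, hL, hO, bddGaps_of_minimal hC hmin e⟩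
  tfae_finish

end SubstLR
end

section
/- Let (Ω,T) be a uniquely ergodic subshift over a finite alphabet A⊂ℝ with invariant probability measure μ. Let (n_k) be a sequence in ℕ with n_k→∞, and set Ω(k)={ω∈Ω : ω(−n_k+l)=ω(l)=ω(n_k+l) for all 0≤l≤n_k−1}. If limsup_{k→∞} μ(Ω(k))>0, then for μ-almost every ω∈Ω the operator H_ω has no eigenvalues. -/
/-!
Gordon's argument. Along a solution of `Hψ = Eψ`, with states `Φ m = (ψ m, ψ (m - 1))`, the
transfer matrix `M` over a block of length `n` has determinant one, so `M² = (tr M) M - 1`. If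
the potential repeats a block three times around the site `j`, the same `M` carries the state at
`j - n` to `j`, at `j` to `j + n` and at `j + n` to `j + 2n`; the two resulting three-term
relations give `‖Φ j‖ ≤ ‖Φ (j + n)‖ + ‖Φ (j - n)‖ + ‖Φ (j + 2n)‖` (split according to
`‖tr M‖ ≤ 1` or not). An `ℓ²` solution decays, so arbitrarily long cubes around one site force
`Φ j = 0`, hence `ψ = 0`.

The set of sequences with arbitrarily long cubes around some site is shift invariant and contains
`limsup Ω(k)`, whose measure is at least `limsup μ(Ω(k)) > 0`. Unique ergodicity makes `μ`
ergodic, so that set has full measure.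
-/

open List Filter Topology MeasureTheory

open scoped Matrix

theorem Matrix.mul_self_fin_two {R : Type*} [CommRing R] (M : Matrix (Fin 2) (Fin 2) R) :
    M * M = M.trace • M - M.det • 1 := by
  ext i j
  fin_cases i <;> fin_cases j <;>
    simp [Matrix.mul_apply, Matrix.trace_fin_two, Matrix.det_fin_two] <;> ring

theorem Matrix.trace_smul_mulVec_fin_two {R : Type*} [CommRing R] {M : Matrix (Fin 2) (Fin 2) R}
    (hM : M.det = 1) (w : Fin 2 → R) : M.trace • (M *ᵥ w) = M *ᵥ (M *ᵥ w) + w := by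
  rw [Matrix.mulVec_mulVec, Matrix.mul_self_fin_two, hM, one_smul, Matrix.sub_mulVec,
    Matrix.smul_mulVec, Matrix.one_mulVec, sub_add_cancel]

theorem norm_le_of_smul_eq_add {𝕜 F : Type*} [NormedField 𝕜] [NormedAddCommGroup F]
    [NormedSpace 𝕜 F] {t : 𝕜} {u v w x : F} (hu : t • u = v + w) (hv : t • v = x + u) :
    ‖u‖ ≤ ‖v‖ + ‖w‖ + ‖x‖ := by
  rcases le_or_gt ‖t‖ 1 with ht | ht
  · calc ‖u‖ = ‖t • v - x‖ := by rw [hv, add_sub_cancel_left]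
      _ ≤ ‖t‖ * ‖v‖ + ‖x‖ := (norm_sub_le _ _).trans_eq (by rw [norm_smul])
      _ ≤ ‖v‖ + ‖w‖ + ‖x‖ := by nlinarith [norm_nonneg v, norm_nonneg w]
  · calc ‖u‖ ≤ ‖t‖ * ‖u‖ := le_mul_of_one_le_left (norm_nonneg u) ht.le
      _ = ‖v + w‖ := by rw [← norm_smul, hu]
      _ ≤ ‖v‖ + ‖w‖ + ‖x‖ := (norm_add_le v w).trans (le_add_of_nonneg_right (norm_nonneg x))

theorem Memℓp.tendsto_cofinite_zero {α E : Type*} [NormedAddCommGroup E] {f : α → E}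
    {p : ENNReal} (hf : Memℓp f p) (hp : 0 < p.toReal) : Tendsto f cofinite (𝓝 0) := by
  rw [tendsto_zero_iff_norm_tendsto_zero]
  have h := (hf.summable hp).tendsto_cofinite_zero.rpow_const (p := p.toReal⁻¹)
    (Or.inr (inv_nonneg.2 hp.le))
  rw [Real.zero_rpow (inv_ne_zero hp.ne')] at h
  refine h.congr fun i => ?_
  exact Real.rpow_rpow_inv (norm_nonneg _) hp.ne'

theorem limsup_measure_le_measure_limsup {X : Type*} [MeasurableSpace X] {μ : Measure X}
    [IsFiniteMeasure μ] {s : ℕ → Set X} (hs : ∀ n, MeasurableSet (s n)) :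
    limsup (fun n => μ (s n)) atTop ≤ μ (limsup s atTop) := by
  have hanti : Antitone fun n => ⋃ i ≥ n, s i := fun m n hmn =>
    Set.biUnion_mono (fun i (hi : n ≤ i) => hmn.trans hi) fun _ _ => subset_rfl
  rw [limsup_eq_iInf_iSup_of_nat, limsup_eq_iInf_iSup_of_nat]
  simp only [Set.iSup_eq_iUnion, Set.iInf_eq_iInter]
  rw [hanti.measure_iInter (fun n => (MeasurableSet.biUnion (Set.to_countable _)
    fun i _ => hs i).nullMeasurableSet) ⟨0, measure_ne_top μ _⟩]
  exact iInf_mono fun n => iSup₂_le fun i hi => measure_mono (Set.subset_biUnion_of_mem hi)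

section UniqueErgodicity

open ProbabilityTheory

variable {X : Type*} [MeasurableSpace X] {f : X → X} {μ : Measure X} {Ω : Set X}

theorem ergodic_of_unique_invariant [IsProbabilityMeasure μ] (hf : Measurable f)
    (hΩ : MeasurableSet Ω) (hμΩ : μ Ω = 1) (hinv : μ.map f = μ)
    (huniq : ∀ ν : Measure X, IsProbabilityMeasure ν → ν Ω = 1 → ν.map f = ν → ν = μ) :
    Ergodic f μ := by
  refine ⟨⟨hf, hinv⟩, ⟨fun s hs hfs => ?_⟩⟩
  rw [eventuallyConst_set', ae_eq_empty, ae_eq_univ]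
  by_cases hs0 : μ s = 0
  · exact Or.inl hs0
  right
  have := cond_isProbabilityMeasure (μ := μ) hs0
  have hΩc : μ Ωᶜ = 0 := (prob_compl_eq_zero_iff hΩ).2 hμΩ
  have hcondΩ : μ[Ω | s] = 1 := by
    rw [cond_apply hs, measure_inter_conull hΩc,
      ENNReal.inv_mul_cancel hs0 (measure_ne_top μ s)]
  have hcond_map : (μ[|s]).map f = μ[|s] := by
    rw [ProbabilityTheory.cond, Measure.map_smul]
    nth_rw 2 [← hfs]
    rw [← Measure.restrict_map hf hs, hinv]
  have hcond : μ[|s] = μ := huniq _ inferInstance hcondΩ hcond_map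
  rw [prob_compl_eq_zero_iff hs, ← hcond, cond_apply_self hs0 (measure_ne_top μ s)]

end UniqueErgodicity

def HasCubeAt {α : Type*} (q : ℤ → α) (j : ℤ) (n : ℕ) : Prop :=
  ∀ l : ℕ, l < n → q (j - n + l) = q (j + l) ∧ q (j + l) = q (j + n + l)

theorem HasCubeAt.comp {α β : Type*} {q : ℤ → α} {j : ℤ} {n : ℕ} (h : HasCubeAt q j n)
    (f : α → β) : HasCubeAt (f ∘ q) j n := fun l hl =>
  ⟨congrArg f (h l hl).1, congrArg f (h l hl).2⟩

theorem measurableSet_setOf_hasCubeAt {α : Type*} [MeasurableSpace α] [MeasurableEq α]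
    (j : ℤ) (n : ℕ) : MeasurableSet {q : ℤ → α | HasCubeAt q j n} := by
  simp only [HasCubeAt, Set.ofPred_forall, Set.ofPred_and]
  exact .iInter fun l => .iInter fun _ =>
    (measurableSet_eq_fun (measurable_pi_apply (j - n + l)) (measurable_pi_apply (j + l))).inter
      (measurableSet_eq_fun (measurable_pi_apply (j + l)) (measurable_pi_apply (j + n + l)))

def gordonSet (α : Type*) : Set (ℤ → α) := {q | ∃ j, ∃ᶠ n in atTop, HasCubeAt q j n}

theorem measurableSet_gordonSet {α : Type*} [MeasurableSpace α] [MeasurableEq α] :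
    MeasurableSet (gordonSet α) := by
  have : gordonSet α = ⋃ j, limsup (fun n => {q : ℤ → α | HasCubeAt q j n}) atTop := by
    ext q
    simp [gordonSet, mem_limsup_iff_frequently_mem]
  rw [this]
  exact .iUnion fun j =>
    MeasurableSet.measurableSet_limsup fun n => measurableSet_setOf_hasCubeAt j n

theorem tendsto_add_mul_natCast_cofinite (j : ℤ) {c : ℤ} (hc : c ≠ 0) :
    Tendsto (fun n : ℕ => j + c * n) atTop cofinite := by
  rw [← Nat.cofinite_eq_atTop]
  exact Function.Injective.tendsto_cofinite fun m n hmn => by simpa [hc] using hmn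

namespace Schrodinger

variable (V : ℤ → ℝ) (E : ℝ)

def SolvesEigenEq (ψ : ℤ → ℂ) : Prop :=
  ∀ n : ℤ, ψ (n + 1) + ψ (n - 1) + (V n : ℂ) * ψ n = (E : ℂ) * ψ n

def stateVec (ψ : ℤ → ℂ) (m : ℤ) : Fin 2 → ℂ := ![ψ m, ψ (m - 1)]

def transferMatrix (m : ℤ) : Matrix (Fin 2) (Fin 2) ℂ := !![(E : ℂ) - V m, -1; 1, 0]

def transfer (a : ℤ) : ℕ → Matrix (Fin 2) (Fin 2) ℂ
  | 0 => 1
  | n + 1 => transferMatrix V E (a + n) * transfer a n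

theorem det_transfer (a : ℤ) : ∀ n, (transfer V E a n).det = 1
  | 0 => by simp [transfer]
  | n + 1 => by
    rw [transfer, Matrix.det_mul, det_transfer a n, mul_one, transferMatrix,
      Matrix.det_fin_two_of]
    ring

variable {V} in
theorem transfer_congr {a b : ℤ} {n : ℕ} (h : ∀ l : ℕ, l < n → V (a + l) = V (b + l)) :
    transfer V E a n = transfer V E b n := by
  induction n with
  | zero => rfl
  | succ n ih =>
    rw [transfer, transfer, transferMatrix, transferMatrix, h n n.lt_succ_self,
      ih fun l hl => h l (hl.trans n.lt_succ_self)]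

variable {V E} {ψ : ℤ → ℂ}

theorem SolvesEigenEq.stateVec_add_one (h : SolvesEigenEq V E ψ) (m : ℤ) :
    stateVec ψ (m + 1) = transferMatrix V E m *ᵥ stateVec ψ m := by
  ext i
  fin_cases i
  · simp [stateVec, transferMatrix, Matrix.mulVec, dotProduct, Fin.sum_univ_two]
    linear_combination h m
  · simp [stateVec, transferMatrix, Matrix.mulVec, dotProduct, Fin.sum_univ_two]

theorem SolvesEigenEq.stateVec_add (h : SolvesEigenEq V E ψ) (a : ℤ) :
    ∀ n : ℕ, stateVec ψ (a + n) = transfer V E a n *ᵥ stateVec ψ a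
  | 0 => by simp [transfer]
  | n + 1 => by
    rw [Nat.cast_succ, ← add_assoc, h.stateVec_add_one, h.stateVec_add a n, transfer,
      Matrix.mulVec_mulVec]

theorem SolvesEigenEq.eq_zero_of_stateVec_eq_zero (h : SolvesEigenEq V E ψ) {j : ℤ}
    (hj : stateVec ψ j = 0) : ψ = 0 := by
  suffices ∀ m, stateVec ψ m = 0 from funext fun m => congrFun (this m) 0
  intro m
  rcases le_total j m with hjm | hmj
  · obtain ⟨n, rfl⟩ : ∃ n : ℕ, m = j + n := ⟨(m - j).toNat, by omega⟩
    rw [h.stateVec_add, hj, Matrix.mulVec_zero]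
  · obtain ⟨n, rfl⟩ : ∃ n : ℕ, j = m + n := ⟨(j - m).toNat, by omega⟩
    rw [h.stateVec_add] at hj
    exact Matrix.eq_zero_of_mulVec_eq_zero (by simp [det_transfer]) hj

theorem tendsto_stateVec (hψ : Tendsto ψ cofinite (𝓝 0)) :
    Tendsto (stateVec ψ) cofinite (𝓝 0) := by
  have hsub : Tendsto (fun m : ℤ => ψ (m - 1)) cofinite (𝓝 0) :=
    hψ.comp (sub_left_injective (b := (1 : ℤ))).tendsto_cofinite
  refine tendsto_pi_nhds.2 fun i => ?_
  fin_cases i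
  · simpa [stateVec] using hψ
  · simpa [stateVec] using hsub

theorem SolvesEigenEq.norm_stateVec_le (h : SolvesEigenEq V E ψ) {j : ℤ} {n : ℕ}
    (hV : HasCubeAt V j n) :
    ‖stateVec ψ j‖ ≤ ‖stateVec ψ (j + n)‖ + ‖stateVec ψ (j - n)‖ + ‖stateVec ψ (j + 2 * n)‖ := by
  set M := transfer V E j n
  have hleft : transfer V E (j - n) n = M :=
    transfer_congr E fun l hl => (hV l hl).1
  have hright : transfer V E (j + n) n = M :=
    transfer_congr E fun l hl => (hV l hl).2.symm
  have h₀ : stateVec ψ j = M *ᵥ stateVec ψ (j - n) := by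
    rw [← hleft, ← h.stateVec_add, sub_add_cancel]
  have h₁ : stateVec ψ (j + n) = M *ᵥ stateVec ψ j := h.stateVec_add j n
  have h₂ : stateVec ψ (j + 2 * n) = M *ᵥ stateVec ψ (j + n) := by
    rw [← hright, ← h.stateVec_add, two_mul, add_assoc]
  have hdet : M.det = 1 := det_transfer V E j n
  refine norm_le_of_smul_eq_add (t := M.trace) ?_ ?_
  · rw [h₁, h₀, Matrix.trace_smul_mulVec_fin_two hdet]
  · rw [h₂, h₁, Matrix.trace_smul_mulVec_fin_two hdet]

theorem SolvesEigenEq.eq_zero_of_frequently_hasCubeAt (h : SolvesEigenEq V E ψ)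
    (hψ : Tendsto ψ cofinite (𝓝 0)) {j : ℤ} (hV : ∃ᶠ n in atTop, HasCubeAt V j n) : ψ = 0 := by
  refine h.eq_zero_of_stateVec_eq_zero (j := j) (norm_le_zero_iff.1 ?_)
  have hlim (c : ℤ) (hc : c ≠ 0) : Tendsto (fun n : ℕ => ‖stateVec ψ (j + c * n)‖) atTop (𝓝 0) :=
    tendsto_norm_zero.comp ((tendsto_stateVec hψ).comp (tendsto_add_mul_natCast_cofinite j hc))
  have hsum := ((hlim 1 one_ne_zero).add (hlim (-1) (by norm_num))).add (hlim 2 two_ne_zero)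
  simp only [one_mul, neg_one_mul, ← sub_eq_add_neg, add_zero] at hsum
  exact ge_of_tendsto_of_frequently hsum (hV.mono fun n hn => h.norm_stateVec_le hn)

end Schrodinger

namespace SubstLR

variable {α : Type*}

theorem measurable_shift [MeasurableSpace α] (k : ℤ) : Measurable (shift k : (ℤ → α) → ℤ → α) :=
  measurable_pi_lambda _ fun n => measurable_pi_apply (n + k)

theorem hasCubeAt_shift_iff (q : ℤ → α) (k j : ℤ) (n : ℕ) :
    HasCubeAt (shift k q) j n ↔ HasCubeAt q (j + k) n := by
  refine forall₂_congr fun l _ => ?_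
  simp only [shift]
  rw [show j - n + l + k = j + k - n + l by ring, show j + l + k = j + k + l by ring,
    show j + n + l + k = j + k + n + l by ring]

theorem preimage_shift_gordonSet (k : ℤ) : shift k ⁻¹' gordonSet α = gordonSet α := by
  ext q
  simp only [Set.mem_preimage, gordonSet, Set.mem_ofPred_eq, hasCubeAt_shift_iff]
  exact ⟨fun ⟨j, hj⟩ => ⟨j + k, hj⟩, fun ⟨j, hj⟩ => ⟨j - k, by rwa [sub_add_cancel]⟩⟩

theorem statement11_general (𝒜 : Finset ℝ) (Ω : Set (ℤ → 𝒜))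
    (hclosed : IsClosed Ω)
    (μ : Measure (ℤ → 𝒜)) (hprob : IsProbabilityMeasure μ) (hsupp : μ Ω = 1)
    (hinv : μ.map (shift 1) = μ)
    (huniq : ∀ ν : Measure (ℤ → 𝒜), IsProbabilityMeasure ν → ν Ω = 1 →
      ν.map (shift 1) = ν → ν = μ)
    (nk : ℕ → ℕ) (hnk : Tendsto nk atTop atTop)
    (hpos : 0 < Filter.limsup (fun k : ℕ =>
      μ {ω ∈ Ω | ∀ l : ℕ, l < nk k →
          ω (-(nk k : ℤ) + l) = ω l ∧ ω l = ω ((nk k : ℤ) + l)}) atTop) :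
    ∀ᵐ ω ∂μ, ∀ E : ℝ, ∀ ψ : ℤ → ℂ, Memℓp ψ 2 →
      (∀ n : ℤ, ψ (n + 1) + ψ (n - 1) + ((ω n : ℝ) : ℂ) * ψ n = (E : ℂ) * ψ n) →
      ψ = 0 := by
  set cube : ℕ → Set (ℤ → 𝒜) := fun k => {ω ∈ Ω | ∀ l : ℕ, l < nk k →
    ω (-(nk k : ℤ) + l) = ω l ∧ ω l = ω ((nk k : ℤ) + l)}
  have hcube (k : ℕ) : cube k = Ω ∩ {ω | HasCubeAt ω 0 (nk k)} := by
    ext ω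
    simp [cube, HasCubeAt]
  have hlimsup : limsup cube atTop ⊆ gordonSet 𝒜 := fun ω hω =>
    ⟨0, hnk.frequently <| (mem_limsup_iff_frequently_mem.1 hω).mono fun k hk => by
      rw [hcube] at hk; exact hk.2⟩
  have hcube_meas (k : ℕ) : MeasurableSet (cube k) := by
    rw [hcube]
    exact hclosed.measurableSet.inter (measurableSet_setOf_hasCubeAt 0 (nk k))
  have hgordon : 0 < μ (gordonSet 𝒜) := hpos.trans_le <|
    (limsup_measure_le_measure_limsup hcube_meas).trans (measure_mono hlimsup)
  have hergodic : Ergodic (shift 1) μ :=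
    ergodic_of_unique_invariant (measurable_shift 1) hclosed.measurableSet hsupp hinv huniq
  have hae : ∀ᵐ ω ∂μ, ω ∈ gordonSet 𝒜 :=
    (hergodic.ae_mem_or_ae_notMem measurableSet_gordonSet
      (preimage_shift_gordonSet 1)).resolve_right
        fun h => hgordon.ne' (measure_eq_zero_iff_ae_notMem.2 h)
  filter_upwards [hae] with ω ⟨j, hj⟩ E ψ hψ heig
  exact Schrodinger.SolvesEigenEq.eq_zero_of_frequently_hasCubeAt heig
    (hψ.tendsto_cofinite_zero (by norm_num)) (hj.mono fun n hn => hn.comp Subtype.val)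

/-- Gordon-type lemma: for a uniquely ergodic subshift, if
`limsup_k μ(Ω(k)) > 0` for the cube sets `Ω(k)`, then `μ`-a.s. `H_ω` has no eigenvalues. -/
theorem statement11 (𝒜 : Finset ℝ) (Ω : Set (ℤ → 𝒜)) (hne : Ω.Nonempty)
    (hclosed : IsClosed Ω) (hinvΩ : ∀ k : ℤ, ∀ ω ∈ Ω, shift k ω ∈ Ω)
    (μ : Measure (ℤ → 𝒜)) (hprob : IsProbabilityMeasure μ) (hsupp : μ Ω = 1)
    (hinv : μ.map (shift 1) = μ)
    (huniq : ∀ ν : Measure (ℤ → 𝒜), IsProbabilityMeasure ν → ν Ω = 1 →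
      ν.map (shift 1) = ν → ν = μ)
    (nk : ℕ → ℕ) (hnk : Tendsto nk atTop atTop)
    (hpos : 0 < Filter.limsup (fun k : ℕ =>
      μ {ω ∈ Ω | ∀ l : ℕ, l < nk k →
          ω (-(nk k : ℤ) + l) = ω l ∧ ω l = ω ((nk k : ℤ) + l)}) atTop) :
    ∀ᵐ ω ∂μ, ∀ E : ℝ, ∀ ψ : ℤ → ℂ, Memℓp ψ 2 →
      (∀ n : ℤ, ψ (n + 1) + ψ (n - 1) + ((ω n : ℝ) : ℂ) * ψ n = (E : ℂ) * ψ n) →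
      ψ = 0 :=
  statement11_general 𝒜 Ω hclosed μ hprob hsupp hinv huniq nk hnk hpos

end SubstLR
end
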